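/- arXiv:0905.2531 — 4 statements merged into one kernel-verified Lean document; each statement's English description precedes it below -/
import Mathlib

section
/- Let X be a Banach space, A ⊆ X* a convex set, and r > 0. Set U = A + r·B_{X*} and define Ã⁽¹⁾ = ⋃_{n ∈ ℕ} weak*-closure(A ∩ n·B_{X*}). Then the envelope Ũ := ⋃{weak*-closure(B) : B is U-bounded} equals Ã⁽¹⁾ + r·B_{X*}. -/
open Metric NormedSpace Pointwise

variable {X : Type*} [NormedAddCommGroup X] [NormedSpace ℝ X]

/-- Weak* closure of a set of functionals on `X`. -/
noncomputable def wscl (S : Set (StrongDual ℝ X)) : Set (StrongDual ℝ X) :=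
  StrongDual.toWeakDual ⁻¹' closure (StrongDual.toWeakDual '' S)

/-- `B` is a `U`-bounded set: norm-bounded with positive distance to the complement of `U`. -/
def UBounded (U B : Set (StrongDual ℝ X)) : Prop :=
  B ⊆ U ∧ Bornology.IsBounded B ∧ ∃ c > 0, ∀ x ∈ B, ∀ y ∉ U, c ≤ dist x y

/-- The envelope `Ũ`: the union of the weak* closures of all `U`-bounded sets. -/
noncomputable def tildeEnv (U : Set (StrongDual ℝ X)) : Set (StrongDual ℝ X) :=
  ⋃ B ∈ {B | UBounded U B}, wscl B

/-- `A⁽¹⁾`: the set of weak* limits of bounded nets from `A`. -/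
noncomputable def dOne (A : Set (StrongDual ℝ X)) : Set (StrongDual ℝ X) :=
  ⋃ n : ℕ, wscl (A ∩ ball 0 (n : ℝ))

/-! For `⊇`: if `p` is a weak* limit of a bounded part `S` of `A` and `‖q‖ < r`, then `S + q` is
`U`-bounded with margin `r - ‖q‖`, and its weak* closure contains `p + q`.
For `⊆`: a `U`-bounded set `B` sits at some depth `c` in `U = A + r B_{X*}`, so by convexity of `A`
it lies in `(A ∩ n B_{X*}) + ρ B_{X*}` for some `n` and some `ρ < r`. Weak* closures of such sums
stay inside `wscl (A ∩ n B_{X*}) + ρ B̄_{X*}`, because the closed ball is weak* compact. -/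

lemma ball_subset_iff_forall_notMem_le_dist {α : Type*} [PseudoMetricSpace α] {U : Set α} {x : α}
    {c : ℝ} : ball x c ⊆ U ↔ ∀ y ∉ U, c ≤ dist x y := by
  refine ⟨fun h y hy => ?_, fun h y hy => ?_⟩
  · by_contra! hxy
    exact hy (h (mem_ball'.2 hxy))
  · by_contra hyU
    exact (h y hyU).not_gt (mem_ball'.1 hy)

lemma mem_inter_ball_add_ball_of_mem_thickening {E : Type*} [SeminormedAddCommGroup E]
    {A : Set E} {b : E} {ρ M : ℝ} (hb : b ∈ Metric.thickening ρ A) (hbM : ‖b‖ ≤ M) :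
    b ∈ A ∩ ball 0 (M + ρ) + ball 0 ρ := by
  obtain ⟨a, ha, hba⟩ := mem_thickening_iff.1 hb
  rw [dist_eq_norm] at hba
  refine ⟨a, ⟨ha, mem_ball_zero_iff.2 ?_⟩, b - a, mem_ball_zero_iff.2 hba, add_sub_cancel _ _⟩
  linarith [norm_le_norm_add_norm_sub' a b, norm_sub_rev a b]

section Convex

variable {E : Type*} [SeminormedAddCommGroup E] [NormedSpace ℝ E] {A : Set E}

lemma Convex.combo_mem_thickening (hA : Convex ℝ A) {a p : E} (ha : a ∈ A) {r : ℝ}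
    (hp : p ∈ Metric.thickening r A) {θ : ℝ} (hθ₀ : 0 < θ) (hθ₁ : θ ≤ 1) :
    θ • p + (1 - θ) • a ∈ Metric.thickening (θ * r) A := by
  obtain ⟨z, hz, hpz⟩ := mem_thickening_iff.1 hp
  refine mem_thickening_iff.2 ⟨θ • z + (1 - θ) • a, hA hz ha hθ₀.le (by linarith) (by ring), ?_⟩
  rw [dist_add_right, dist_smul₀, Real.norm_of_nonneg hθ₀.le]
  exact mul_lt_mul_of_pos_left hpz hθ₀

/-- Were `b` farther from `A`, pick `a ∈ A` almost nearest to `b` and push past `b` away from `a`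
by `s < c`: the point reached is still in `A + r B`, and convexity along the segment back to `a`
brings `b` closer to `A` than `infDist b A`. -/
lemma Convex.infDist_le_of_ball_subset_thickening (hA : Convex ℝ A) {b : E} {c r : ℝ}
    (hc : 0 < c) (hcr : c ≤ r) (h : ball b c ⊆ Metric.thickening r A) :
    infDist b A ≤ r - c := by
  by_contra! hd
  have hb : b ∈ Metric.thickening r A := h (mem_ball_self hc)
  have hne : A.Nonempty := by
    obtain ⟨a, ha, -⟩ := mem_thickening_iff.1 hb
    exact ⟨a, ha⟩
  set d := infDist b A
  have hdr : d < r := (mem_thickening_iff_infDist_lt hne).1 hb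
  set s := (r - d + c) / 2 with hs_def
  have hs : 0 < s := by linarith
  have hsc : s < c := by linarith
  obtain ⟨a, ha, hba⟩ := (infDist_lt_iff hne).1 (show d < d * s / (r - d) by
    rw [lt_div_iff₀ (by linarith)]; nlinarith)
  set t := dist b a
  have ht : 0 < t := (by linarith : 0 < d).trans_le (infDist_le_dist_of_mem ha)
  have hp : b + (s / t) • (b - a) ∈ Metric.thickening r A := by
    refine h (mem_ball_iff_norm.2 ?_)
    rw [add_sub_cancel_left, norm_smul, ← dist_eq_norm, Real.norm_of_nonneg (by positivity),
      div_mul_cancel₀ _ ht.ne']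
    exact hsc
  have hcombo : (t / (s + t)) • (b + (s / t) • (b - a)) + (1 - t / (s + t)) • a = b := by
    match_scalars <;> field_simp <;> ring
  have hbA := hA.combo_mem_thickening (θ := t / (s + t)) ha hp (by positivity)
    (div_le_one_of_le₀ (by linarith) (by positivity))
  rw [hcombo, mem_thickening_iff_infDist_lt hne, div_mul_eq_mul_div,
    lt_div_iff₀ (by positivity)] at hbA
  rw [lt_div_iff₀ (by linarith)] at hba
  linarith

end Convex

lemma uBounded_iff_exists_ball_subset {U B : Set (StrongDual ℝ X)} :
    UBounded U B ↔ Bornology.IsBounded B ∧ ∃ c > 0, ∀ x ∈ B, ball x c ⊆ U := by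
  simp only [UBounded, ← ball_subset_iff_forall_notMem_le_dist]
  refine ⟨fun ⟨_, hB, hc⟩ => ⟨hB, hc⟩, fun ⟨hB, c, hc, hball⟩ => ⟨?_, hB, c, hc, hball⟩⟩
  exact fun x hx => hball x hx (mem_ball_self hc)

lemma wscl_mono {S T : Set (StrongDual ℝ X)} (h : S ⊆ T) : wscl S ⊆ wscl T :=
  Set.preimage_mono (closure_mono (Set.image_mono h))

lemma add_mem_wscl_add_singleton {S : Set (StrongDual ℝ X)} {x : StrongDual ℝ X} (hx : x ∈ wscl S)
    (y : StrongDual ℝ X) : x + y ∈ wscl (S + {y}) := by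
  have := image_closure_subset_closure_image (continuous_add_const (StrongDual.toWeakDual y))
    ⟨_, hx, rfl⟩
  rw [wscl, Set.mem_preimage, map_add, Set.image_add, Set.image_singleton, Set.add_singleton]
  exact this

lemma wscl_add_ball_subset (S : Set (StrongDual ℝ X)) (ρ : ℝ) :
    wscl (S + ball 0 ρ) ⊆ wscl S + closedBall 0 ρ := by
  have himage : StrongDual.toWeakDual '' (wscl S + closedBall 0 ρ) =
      closure (StrongDual.toWeakDual '' S) + WeakDual.toStrongDual ⁻¹' closedBall 0 ρ := by
    rw [Set.image_add, wscl, Set.image_preimage_eq _ StrongDual.toWeakDual.surjective]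
    congr 1
    ext x
    exact ⟨fun ⟨w, hw, hwx⟩ => hwx ▸ hw, fun hx => ⟨WeakDual.toStrongDual x, hx, rfl⟩⟩
  have hclosed : IsClosed (closure (StrongDual.toWeakDual '' S) +
      WeakDual.toStrongDual ⁻¹' closedBall (0 : StrongDual ℝ X) ρ) :=
    isClosed_closure.add_right_of_isCompact (WeakDual.isCompact_closedBall 0 ρ)
  intro x hx
  rw [← StrongDual.toWeakDual.injective.mem_set_image, himage]
  refine closure_minimal ?_ hclosed hx
  rw [Set.image_add]
  refine Set.add_subset_add subset_closure ?_
  rintro _ ⟨w, hw, rfl⟩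
  exact ball_subset_closedBall (α := StrongDual ℝ X) hw

lemma uBounded_thickening_add_singleton {A S : Set (StrongDual ℝ X)} (hSA : S ⊆ A)
    (hS : Bornology.IsBounded S) {r : ℝ} {q : StrongDual ℝ X} (hq : ‖q‖ < r) :
    UBounded (Metric.thickening r A) (S + {q}) := by
  refine uBounded_iff_exists_ball_subset.2
    ⟨hS.add Bornology.isBounded_singleton, r - ‖q‖, by linarith, ?_⟩
  rintro _ ⟨a, ha, _, rfl, rfl⟩
  refine (ball_subset_ball' ?_).trans (ball_subset_thickening (hSA ha) r)
  simp

lemma dOne_add_ball_subset_tildeEnv (A : Set (StrongDual ℝ X)) (r : ℝ) :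
    dOne A + ball 0 r ⊆ tildeEnv (Metric.thickening r A) := by
  rintro _ ⟨p, hp, q, hq, rfl⟩
  obtain ⟨n, hn⟩ := Set.mem_iUnion.1 hp
  have hU : UBounded (Metric.thickening r A) (A ∩ ball 0 n + {q}) :=
    uBounded_thickening_add_singleton Set.inter_subset_left
      (isBounded_ball.subset Set.inter_subset_right) (mem_ball_zero_iff.1 hq)
  exact Set.mem_biUnion hU (add_mem_wscl_add_singleton hn q)

lemma Convex.tildeEnv_thickening_subset {A : Set (StrongDual ℝ X)} (hA : Convex ℝ A) {r : ℝ}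
    (hr : 0 < r) : tildeEnv (Metric.thickening r A) ⊆ dOne A + ball 0 r := by
  intro x hx
  obtain ⟨B, hB, hxB⟩ := Set.mem_iUnion₂.1 hx
  obtain ⟨hBb, c, hc, hball⟩ := uBounded_iff_exists_ball_subset.1 hB
  obtain ⟨M, hM⟩ := hBb.subset_closedBall 0
  obtain ⟨n, hn⟩ := exists_nat_gt (M + r)
  set c' := min c r
  have hc' : 0 < c' := lt_min hc hr
  have hsub : B ⊆ A ∩ ball 0 n + ball 0 (r - c' / 2) := by
    intro b hb
    have hbU := hball b hb
    obtain ⟨a, ha, -⟩ := mem_thickening_iff.1 (hbU (mem_ball_self hc))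
    have hd := hA.infDist_le_of_ball_subset_thickening hc' (min_le_right _ _)
      ((ball_subset_ball (min_le_left _ _)).trans hbU)
    have hbρ : b ∈ Metric.thickening (r - c' / 2) A :=
      (mem_thickening_iff_infDist_lt ⟨a, ha⟩).2 (by linarith)
    refine Set.add_subset_add_right (Set.inter_subset_inter_right _ (ball_subset_ball ?_))
      (mem_inter_ball_add_ball_of_mem_thickening hbρ (mem_closedBall_zero_iff.1 (hM hb)))
    linarith
  exact Set.add_subset_add (Set.subset_iUnion (fun n : ℕ => wscl (A ∩ ball 0 n)) n)
    (closedBall_subset_ball (by linarith)) (wscl_add_ball_subset _ _ (wscl_mono hsub hxB))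

theorem tildeEnv_add_ball_general (A : Set (StrongDual ℝ X)) (hA : Convex ℝ A)
    (r : ℝ) (hr : 0 < r) :
    tildeEnv (A + ball (0 : StrongDual ℝ X) r) = dOne A + ball (0 : StrongDual ℝ X) r := by
  rw [add_ball_zero r A]
  exact (hA.tildeEnv_thickening_subset hr).antisymm (dOne_add_ball_subset_tildeEnv A r)

/-- For a convex set `A ⊆ X*` and `r > 0`, the envelope of `U = A + r B_{X*}` is
`A⁽¹⁾ + r B_{X*}`. -/
theorem tildeEnv_add_ball [CompleteSpace X] (A : Set (StrongDual ℝ X)) (hA : Convex ℝ A)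
    (r : ℝ) (hr : 0 < r) :
    tildeEnv (A + ball (0 : StrongDual ℝ X) r) = dOne A + ball (0 : StrongDual ℝ X) r :=
  tildeEnv_add_ball_general A hA r hr
end

section
/- Let A = {x ∈ ℓ¹(ℕ×ℕ) : for all k ∈ ℕ, x(k,1) = (1/k)·Σ_{n≥2} x(k,n)}, a linear subspace of ℓ¹(ℕ×ℕ) = c₀(ℕ×ℕ)*. Then A⁽¹⁾ (the set of weak* limits of bounded sequences from A) is norm-dense in ℓ¹(ℕ×ℕ) but is a proper subset: the element x with x(k,1) = 1/k² and x(k,n) = 0 for n ≥ 2 does not belong to A⁽¹⁾. -/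
/-!
Row `k` of the relation defining `A` is the kernel of the functional
`φₖ x = (k + 1) x(k,0) - Σ_{n ≥ 1} x(k,n)`. A unit vector `e_(k,n)` is the pointwise limit of the
bounded sequence `e_(k,n) + φₖ(e_(k,n)) e_(k,j+1)` in `A`, and `A⁽¹⁾` is a subspace, so it contains
every finitely supported vector and is dense. Conversely, the relation gives
`Σₖ (k + 1) |y(k,0)| ≤ ‖y‖` for `y ∈ A`, a bound that survives bounded pointwise limits; for the
given `x` the left-hand side is the harmonic series.
-/

open Filter

/-- The set of weak* limits of bounded sequences from `S ⊆ ℓ¹(ℕ×ℕ) = c₀(ℕ×ℕ)*`; on bounded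
sets the weak* topology is the topology of pointwise convergence. -/
def seqDOne (S : Set (lp (fun _ : ℕ × ℕ => ℝ) 1)) : Set (lp (fun _ : ℕ × ℕ => ℝ) 1) :=
  {x | ∃ u : ℕ → lp (fun _ : ℕ × ℕ => ℝ) 1, (∀ j, u j ∈ S) ∧
    (∃ M : ℝ, ∀ j, ‖u j‖ ≤ M) ∧
    ∀ p : ℕ × ℕ, Tendsto (fun j => (u j : ℕ × ℕ → ℝ) p) atTop (nhds ((x : ℕ × ℕ → ℝ) p))}

/-- `A = {x ∈ ℓ¹(ℕ×ℕ) : ∀ k, x(k,0) = (1/(k+1))·Σ_{n≥1} x(k,n)}`. -/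
def A14 : Set (lp (fun _ : ℕ × ℕ => ℝ) 1) :=
  {x | ∀ k : ℕ,
    (x : ℕ × ℕ → ℝ) (k, 0) = (1 / ((k : ℝ) + 1)) * ∑' n : ℕ, (x : ℕ × ℕ → ℝ) (k, n + 1)}

open Finset
open scoped lp

namespace lp

variable {ι κ E : Type*} [NormedAddCommGroup E]

lemma summable_norm_of_one (f : ℓ¹(ι, E)) : Summable fun i => ‖f i‖ := by
  simpa using (lp.memℓp f).summable (by norm_num)

lemma norm_eq_tsum_norm_of_one (f : ℓ¹(ι, E)) : ‖f‖ = ∑' i, ‖f i‖ := by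
  simp [lp.norm_eq_tsum_rpow (p := 1) (by norm_num)]

lemma sum_tsum_norm_row_le (f : ℓ¹(ι × κ, E)) (s : Finset ι) :
    ∑ i ∈ s, ∑' j, ‖f (i, j)‖ ≤ ‖f‖ := by
  have hf := summable_norm_of_one f
  calc ∑ i ∈ s, ∑' j, ‖f (i, j)‖
      ≤ ∑' i, ∑' j, ‖f (i, j)‖ :=
        hf.prod.sum_le_tsum s fun i _ => tsum_nonneg fun j => norm_nonneg _
    _ = ‖f‖ := by rw [← hf.tsum_prod, norm_eq_tsum_norm_of_one]

lemma dense_of_forall_single_mem [DecidableEq ι] {p : ENNReal} [Fact (1 ≤ p)] (hp : p ≠ ⊤)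
    {S : AddSubmonoid (lp (fun _ : ι => E) p)} (hS : ∀ i a, lp.single p i a ∈ S) :
    Dense (S : Set (lp (fun _ : ι => E) p)) := fun f =>
  mem_closure_of_tendsto (lp.hasSum_single hp f)
    (Eventually.of_forall fun _ => S.sum_mem fun i _ => hS i (f i))

end lp

lemma summable_row_succ (x : ℓ¹(ℕ × ℕ, ℝ)) (k : ℕ) : Summable fun n => x (k, n + 1) :=
  ((lp.summable_norm_of_one x).of_norm.prod_factor k).comp_injective (add_left_injective 1)

noncomputable def rowDefect (k : ℕ) : ℓ¹(ℕ × ℕ, ℝ) →ₗ[ℝ] ℝ where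
  toFun x := ((k : ℝ) + 1) * x (k, 0) - ∑' n, x (k, n + 1)
  map_add' x y := by
    simp only [lp.coeFn_add, Pi.add_apply]
    rw [(summable_row_succ x k).tsum_add (summable_row_succ y k)]
    ring
  map_smul' c x := by
    simp only [lp.coeFn_smul, Pi.smul_apply, smul_eq_mul, tsum_mul_left, RingHom.id_apply]
    ring

lemma mem_A14_iff {x : ℓ¹(ℕ × ℕ, ℝ)} : x ∈ A14 ↔ ∀ k, rowDefect k x = 0 := by
  refine forall_congr' fun k => ?_
  have hk : (k : ℝ) + 1 ≠ 0 := by positivity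
  simp only [rowDefect, LinearMap.coe_mk, AddHom.coe_mk, sub_eq_zero]
  constructor <;> intro h
  · rw [h]; field_simp
  · rw [← h]; field_simp

lemma A14_eq_iInf_ker : A14 = ↑(⨅ k, LinearMap.ker (rowDefect k)) := by
  ext x
  simp [mem_A14_iff]

lemma rowDefect_single_of_ne {k k' : ℕ} (h : k' ≠ k) (n : ℕ) (a : ℝ) :
    rowDefect k (lp.single 1 (k', n) a) = 0 := by
  simp [rowDefect, Ne.symm h]

lemma rowDefect_single_succ (k n : ℕ) (a : ℝ) :
    rowDefect k (lp.single 1 (k, n + 1) a) = -a := by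
  simp [rowDefect, Pi.single_apply]

def seqDOneSubmodule (p : Submodule ℝ ℓ¹(ℕ × ℕ, ℝ)) : Submodule ℝ ℓ¹(ℕ × ℕ, ℝ) where
  carrier := seqDOne p
  zero_mem' := ⟨0, fun _ => p.zero_mem, ⟨0, fun _ => by simp⟩, fun _ => tendsto_const_nhds⟩
  add_mem' := by
    rintro x y ⟨u, hu, ⟨M, hM⟩, hux⟩ ⟨v, hv, ⟨N, hN⟩, hvy⟩
    exact ⟨u + v, fun j => p.add_mem (hu j) (hv j),
      ⟨M + N, fun j => (norm_add_le _ _).trans (add_le_add (hM j) (hN j))⟩,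
      fun q => (hux q).add (hvy q)⟩
  smul_mem' := by
    rintro c x ⟨u, hu, ⟨M, hM⟩, hux⟩
    exact ⟨c • u, fun j => p.smul_mem c (hu j),
      ⟨‖c‖ * M, fun j => (norm_smul_le c (u j)).trans (by gcongr; exact hM j)⟩,
      fun q => (hux q).const_mul c⟩

/-- Pushing the defect of row `k` into a bump `(k, j + 1)` that escapes to infinity. -/
lemma mem_seqDOne_A14_of_rowDefect_eq_zero {x : ℓ¹(ℕ × ℕ, ℝ)} {k : ℕ}
    (hx : ∀ k' ≠ k, rowDefect k' x = 0) : x ∈ seqDOne A14 := by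
  refine ⟨fun j => x + lp.single 1 (k, j + 1) (rowDefect k x), fun j => ?_,
    ⟨‖x‖ + ‖rowDefect k x‖, fun j => ?_⟩, fun q => ?_⟩
  · refine mem_A14_iff.2 fun k' => ?_
    rw [map_add]
    obtain rfl | hk' := eq_or_ne k' k
    · rw [rowDefect_single_succ, add_neg_cancel]
    · rw [hx k' hk', rowDefect_single_of_ne hk'.symm, add_zero]
  · exact (norm_add_le _ _).trans_eq (by rw [lp.norm_single (by norm_num)])
  · refine tendsto_const_nhds.congr' ?_
    filter_upwards [eventually_ge_atTop q.2] with j hj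
    have hq : q ≠ (k, j + 1) := fun h => by rw [h] at hj; omega
    simp [Pi.single_eq_of_ne hq]

lemma single_mem_seqDOne_A14 (q : ℕ × ℕ) (a : ℝ) : lp.single 1 q a ∈ seqDOne A14 :=
  mem_seqDOne_A14_of_rowDefect_eq_zero fun _ hk' => rowDefect_single_of_ne (Ne.symm hk') q.2 a

lemma dense_seqDOne_A14 : Dense (seqDOne A14) := by
  have hdense := lp.dense_of_forall_single_mem ENNReal.one_ne_top
    (S := (seqDOneSubmodule (⨅ k, LinearMap.ker (rowDefect k))).toAddSubmonoid) fun q a => by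
      change _ ∈ seqDOne _
      rw [← A14_eq_iInf_ker]
      exact single_mem_seqDOne_A14 q a
  rwa [A14_eq_iInf_ker]

/-- The relation forces the tail of row `k` to have mass at least `(k + 1) |x (k, 0)|`. -/
lemma sum_mul_abs_le_norm_of_mem_A14 {x : ℓ¹(ℕ × ℕ, ℝ)} (hx : x ∈ A14) (s : Finset ℕ) :
    ∑ k ∈ s, ((k : ℝ) + 1) * |x (k, 0)| ≤ ‖x‖ := by
  refine le_trans (sum_le_sum fun k _ => ?_) (lp.sum_tsum_norm_row_le x s)
  have hrow : Summable fun n => ‖x (k, n)‖ := (lp.summable_norm_of_one x).prod_factor k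
  have htail : ((k : ℝ) + 1) * x (k, 0) = ∑' n, x (k, n + 1) :=
    sub_eq_zero.1 (mem_A14_iff.1 hx k)
  calc ((k : ℝ) + 1) * |x (k, 0)| = ‖∑' n, x (k, n + 1)‖ := by
        rw [← htail, Real.norm_eq_abs, abs_mul, abs_of_pos (show (0 : ℝ) < k + 1 by positivity)]
    _ ≤ ∑' n, ‖x (k, n + 1)‖ :=
        norm_tsum_le_tsum_norm (hrow.comp_injective (add_left_injective 1))
    _ ≤ ∑' n, ‖x (k, n)‖ := by
        rw [hrow.tsum_eq_zero_add]
        exact le_add_of_nonneg_left (norm_nonneg _)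

lemma exists_sum_mul_abs_le_of_mem_seqDOne_A14 {x : ℓ¹(ℕ × ℕ, ℝ)} (hx : x ∈ seqDOne A14) :
    ∃ M, ∀ s : Finset ℕ, ∑ k ∈ s, ((k : ℝ) + 1) * |x (k, 0)| ≤ M := by
  obtain ⟨u, hu, ⟨M, hM⟩, hux⟩ := hx
  refine ⟨M, fun s => ?_⟩
  have hlim : Tendsto (fun j => ∑ k ∈ s, ((k : ℝ) + 1) * |u j (k, 0)|) atTop
      (nhds (∑ k ∈ s, ((k : ℝ) + 1) * |x (k, 0)|)) :=
    tendsto_finsetSum s fun k _ => (hux (k, 0)).abs.const_mul _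
  exact le_of_tendsto' hlim fun j => (sum_mul_abs_le_norm_of_mem_A14 (hu j) s).trans (hM j)

/-- `A14` is a linear subspace of `ℓ¹(ℕ×ℕ) = c₀(ℕ×ℕ)*` whose set `A⁽¹⁾` of weak* limits of
bounded sequences is norm-dense in `ℓ¹(ℕ×ℕ)` but proper: the element `x` with
`x(k,0) = 1/(k+1)²` and `x(k,n) = 0` for `n ≥ 1` does not belong to `A⁽¹⁾`. -/
theorem l1_example :
    (∃ p : Submodule ℝ (lp (fun _ : ℕ × ℕ => ℝ) 1),
      (p : Set (lp (fun _ : ℕ × ℕ => ℝ) 1)) = A14) ∧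
    Dense (seqDOne A14) ∧
    (∀ x : lp (fun _ : ℕ × ℕ => ℝ) 1,
      (∀ k : ℕ, (x : ℕ × ℕ → ℝ) (k, 0) = 1 / ((k : ℝ) + 1) ^ 2) →
      (∀ k n : ℕ, (x : ℕ × ℕ → ℝ) (k, n + 1) = 0) →
      x ∉ seqDOne A14) := by
  refine ⟨⟨_, A14_eq_iInf_ker.symm⟩, dense_seqDOne_A14, fun x hx0 _ hx => ?_⟩
  obtain ⟨M, hM⟩ := exists_sum_mul_abs_le_of_mem_seqDOne_A14 hx
  have hharmonic : ∀ k : ℕ, ((k : ℝ) + 1) * |x (k, 0)| = 1 / ((k : ℝ) + 1) := fun k => by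
    rw [hx0 k, abs_of_pos (by positivity)]
    field_simp
  obtain ⟨K, hK⟩ := (Real.tendsto_sum_range_one_div_nat_succ_atTop.eventually_gt_atTop M).exists
  have hbound := hM (range K)
  simp only [hharmonic] at hbound
  linarith
end

section
/- Let X be a Banach space and A ⊆ X* a weak* dense linear subspace such that A⁽¹⁾ = X* (i.e., A is norming: ⋃_n weak*-closure(A ∩ n·B_{X*}) = X*). Then for every r > 0 the open set U = A + r·B_{X*} is boundedly regular: every bounded subset of X* is contained in the weak* closure of some U-bounded subset of U. -/
open Metric NormedSpace Pointwise

variable {X : Type*} [NormedAddCommGroup X] [NormedSpace ℝ X]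

/-! The weak*-closed sets `wscl (A ∩ n • B_{X*})` cover the Banach space `X*` (complete whether or
not `X` is), so by Baire one of them has norm-interior. Being convex and symmetric, it then contains
a ball `ε • B_{X*}`, and rescaling puts every bounded set inside `wscl (A ∩ M • B_{X*})` for some
`M`; and `A ∩ M • B_{X*}` is `U`-bounded, as every point of it is at distance at least `r` from
the complement of `U = A + r • B_{X*}`. -/

lemma isClosed_wscl (S : Set (StrongDual ℝ X)) : IsClosed (wscl S) :=
  isClosed_closure.preimage Dual.toWeakDual_continuous

lemma smul_wscl_subset (t : ℝ) (S : Set (StrongDual ℝ X)) : t • wscl S ⊆ wscl (t • S) := by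
  rintro _ ⟨x, hx, rfl⟩
  change StrongDual.toWeakDual (t • x) ∈ closure (StrongDual.toWeakDual '' (t • S))
  rw [map_smul, image_smul_set]
  exact smul_closure_subset t _ ⟨_, hx, rfl⟩

lemma convex_wscl {S : Set (StrongDual ℝ X)} (hS : Convex ℝ S) : Convex ℝ (wscl S) :=
  ((hS.linear_image StrongDual.toWeakDual.toLinearMap).closure).linear_preimage
    StrongDual.toWeakDual.toLinearMap

lemma ball_zero_subset_of_convex_of_neg_mem {E : Type*} [SeminormedAddCommGroup E]
    [NormedSpace ℝ E] {S : Set E} (hS : Convex ℝ S) (hneg : ∀ x ∈ S, -x ∈ S) {x : E} {ε : ℝ}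
    (hx : ball x ε ⊆ S) : ball 0 ε ⊆ S := by
  intro y hy
  have hy' : ‖y‖ < ε := mem_ball_zero_iff.mp hy
  have hplus : x + y ∈ S := hx (by simpa [dist_eq_norm] using hy')
  have hminus : y - x ∈ S := by
    simpa using hneg _ (hx (show x - y ∈ ball x ε by simpa [dist_eq_norm] using hy'))
  -- `y` is the midpoint of `x + y` and `y - x`
  convert hS hplus hminus (by norm_num : (0 : ℝ) ≤ 1 / 2) (by norm_num : (0 : ℝ) ≤ 1 / 2)
    (by norm_num) using 1
  module

lemma neg_mem_wscl_of_neg_mem {S : Set (StrongDual ℝ X)} (hneg : ∀ x ∈ S, -x ∈ S) :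
    ∀ x ∈ wscl S, -x ∈ wscl S := by
  intro x hx
  refine wscl_mono ?_ (smul_wscl_subset (-1) S ⟨x, hx, neg_one_smul ℝ x⟩)
  rintro _ ⟨y, hy, rfl⟩
  convert hneg y hy using 1
  exact neg_one_smul ℝ y

lemma exists_ball_subset_wscl_inter_ball (A : Submodule ℝ (StrongDual ℝ X))
    (hnorming : dOne (A : Set (StrongDual ℝ X)) = Set.univ) :
    ∃ n : ℕ, ∃ ε > 0, ball 0 ε ⊆ wscl ((A : Set (StrongDual ℝ X)) ∩ ball 0 n) := by
  obtain ⟨n, x, hx⟩ := nonempty_interior_of_iUnion_of_closed (fun _ ↦ isClosed_wscl _) hnorming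
  obtain ⟨ε, hε, hball⟩ := Metric.isOpen_iff.mp isOpen_interior x hx
  refine ⟨n, ε, hε, ball_zero_subset_of_convex_of_neg_mem ?_ ?_ (hball.trans interior_subset)⟩
  · exact convex_wscl (A.convex.inter (convex_ball _ _))
  · exact neg_mem_wscl_of_neg_mem fun y ⟨hyA, hyn⟩ ↦ ⟨A.neg_mem hyA, by simpa using hyn⟩

lemma ball_smul_subset_wscl_inter_ball (A : Submodule ℝ (StrongDual ℝ X)) {n ε t : ℝ}
    (ht : 0 < t) (h : ball 0 ε ⊆ wscl ((A : Set (StrongDual ℝ X)) ∩ ball 0 n)) :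
    ball 0 (t * ε) ⊆ wscl ((A : Set (StrongDual ℝ X)) ∩ ball 0 (t * n)) := by
  have hscale : t • ((A : Set (StrongDual ℝ X)) ∩ ball 0 n) ⊆ (A : Set _) ∩ ball 0 (t * n) := by
    rintro _ ⟨y, ⟨hyA, hyn⟩, rfl⟩
    refine ⟨A.smul_mem t hyA, ?_⟩
    rw [mem_ball_zero_iff, norm_smul, Real.norm_of_nonneg ht.le]
    exact mul_lt_mul_of_pos_left (mem_ball_zero_iff.mp hyn) ht
  calc ball 0 (t * ε) = t • ball 0 ε := by
        rw [_root_.smul_ball ht.ne', smul_zero, Real.norm_of_nonneg ht.le]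
    _ ⊆ t • wscl ((A : Set (StrongDual ℝ X)) ∩ ball 0 n) := Set.smul_set_mono h
    _ ⊆ wscl _ := smul_wscl_subset t _
    _ ⊆ _ := wscl_mono hscale

lemma uBounded_add_ball_of_subset {S T : Set (StrongDual ℝ X)} (hTS : T ⊆ S)
    (hT : Bornology.IsBounded T) {r : ℝ} (hr : 0 < r) : UBounded (S + ball 0 r) T := by
  refine ⟨fun y hy ↦ ⟨y, hTS hy, 0, mem_ball_self hr, add_zero y⟩, hT, r, hr, ?_⟩
  intro x hx y hy
  by_contra! hlt
  exact hy ⟨x, hTS hx, y - x, by rwa [mem_ball_zero_iff, ← dist_eq_norm, dist_comm],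
    add_sub_cancel x y⟩

theorem norming_subspace_boundedly_regular_general
    (A : Submodule ℝ (StrongDual ℝ X))
    (hnorming : dOne (A : Set (StrongDual ℝ X)) = Set.univ)
    (r : ℝ) (hr : 0 < r) :
    ∀ C : Set (StrongDual ℝ X), Bornology.IsBounded C →
      ∃ B, UBounded ((A : Set (StrongDual ℝ X)) + ball (0 : StrongDual ℝ X) r) B ∧ C ⊆ wscl B := by
  intro C hC
  obtain ⟨n, ε, hε, hball⟩ := exists_ball_subset_wscl_inter_ball A hnorming
  obtain ⟨R, hR, hCR⟩ := hC.subset_ball_lt 0 0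
  refine ⟨(A : Set (StrongDual ℝ X)) ∩ ball 0 (R / ε * n),
    uBounded_add_ball_of_subset Set.inter_subset_left
      (isBounded_ball.subset Set.inter_subset_right) hr, ?_⟩
  calc C ⊆ ball 0 (R / ε * ε) := by rwa [div_mul_cancel₀ R hε.ne']
    _ ⊆ _ := ball_smul_subset_wscl_inter_ball A (div_pos hR hε) hball

/-- If `A ⊆ X*` is a weak* dense linear subspace with `A⁽¹⁾ = X*` (i.e. `A` is norming),
then for every `r > 0` the set `U = A + r B_{X*}` is boundedly regular: every bounded
subset of `X*` is contained in the weak* closure of some `U`-bounded set. -/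
theorem norming_subspace_boundedly_regular [CompleteSpace X]
    (A : Submodule ℝ (StrongDual ℝ X))
    (hdense : wscl (A : Set (StrongDual ℝ X)) = Set.univ)
    (hnorming : dOne (A : Set (StrongDual ℝ X)) = Set.univ)
    (r : ℝ) (hr : 0 < r) :
    ∀ C : Set (StrongDual ℝ X), Bornology.IsBounded C →
      ∃ B, UBounded ((A : Set (StrongDual ℝ X)) + ball (0 : StrongDual ℝ X) r) B ∧ C ⊆ wscl B :=
  norming_subspace_boundedly_regular_general A hnorming r hr
end

section
/- Let X be a Banach space, A ⊆ X* convex, r > 0, U = A + r·B_{X*}, and let M ⊆ Ũ be U-bounded, say M + c·B_{X*} ⊆ U for some c > 0. Then r ≥ c/2 is forced for points of M at positive distance from A, and M ⊆ A + s·B_{X*} for any s ∈ (r − c/2, r) with s > 0; in particular there exists s ∈ (0, r) with M ⊆ A + s·B_{X*}. -/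
/-
If `η` lies at distance `d > 0` from a convex set `A`, Hahn–Banach separates the ball `B(η, d)`
from `A` by a functional `f`, so that `f ≥ f η + d ‖f‖` on `A`. Moving from `η` in a direction
`ζ` of norm `< 1` along which `f` decreases at rate at least `‖f‖ / 2` then increases the
distance to `A` at rate at least `1/2`. For `η ∈ M` and `t < c` the point `η + t ζ` still lies
in `A + r B`, whence `d + c / 2 ≤ r`: every point of `M` is either in the closure of `A` or
at distance at most `r - c / 2` from it.
-/

open Metric NormedSpace Pointwise

variable {X : Type*} [NormedAddCommGroup X] [NormedSpace ℝ X]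

namespace ContinuousLinearMap

variable {E : Type*} [NormedAddCommGroup E] [NormedSpace ℝ E]

theorem exists_norm_lt_one_lt_apply (f : StrongDual ℝ E) {r : ℝ} (hr : r < ‖f‖) :
    ∃ x : E, ‖x‖ < 1 ∧ r < f x := by
  obtain ⟨x, hx, hfx⟩ := f.exists_lt_apply_of_lt_opNorm hr
  rcases le_total 0 (f x) with h | h
  · exact ⟨x, hx, by rwa [Real.norm_of_nonneg h] at hfx⟩
  · exact ⟨-x, by rwa [norm_neg], by rwa [map_neg, ← Real.norm_of_nonpos h]⟩

theorem add_mul_norm_le_of_forall_mem_ball_lt (f : StrongDual ℝ E) {η : E} {d u : ℝ}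
    (hd : 0 < d) (h : ∀ x ∈ ball η d, f x < u) : f η + d * ‖f‖ ≤ u := by
  suffices ‖f‖ ≤ (u - f η) / d by
    rw [le_div_iff₀ hd] at this
    linarith
  refine le_of_forall_lt fun r hr ↦ ?_
  obtain ⟨z, hz, hrz⟩ := f.exists_norm_lt_one_lt_apply hr
  have hmem : η + d • z ∈ ball η d := by
    rw [mem_ball, dist_eq_norm, add_sub_cancel_left, norm_smul, Real.norm_of_nonneg hd.le]
    exact mul_lt_of_lt_one_right hd hz
  have hfz := h _ hmem
  rw [map_add, map_smul, smul_eq_mul] at hfz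
  rw [lt_div_iff₀ hd]
  linarith [mul_lt_mul_of_pos_right hrz hd]

end ContinuousLinearMap

section Tube

variable {E : Type*} [NormedAddCommGroup E] [NormedSpace ℝ E] {A M : Set E}

theorem Convex.exists_infDist_add_half_le (hA : Convex ℝ A) {η : E} (hd : 0 < infDist η A) :
    ∃ ζ : E, ‖ζ‖ < 1 ∧ ∀ t : ℝ, 0 ≤ t → infDist η A + t / 2 ≤ infDist (η + t • ζ) A := by
  set d := infDist η A
  obtain ⟨a₀, ha₀⟩ : A.Nonempty := Set.nonempty_iff_ne_empty.2 fun h ↦ by simp [d, h] at hd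
  obtain ⟨f, u, hf_ball, hf_A⟩ :=
    geometric_hahn_banach_open (convex_ball η d) isOpen_ball hA disjoint_ball_infDist
  have hf_sep : f η + d * ‖f‖ ≤ u := f.add_mul_norm_le_of_forall_mem_ball_lt hd hf_ball
  have hf_pos : 0 < ‖f‖ := norm_pos_iff.2 fun hf ↦ by
    have hη := hf_ball η (mem_ball_self hd)
    have ha₀ := hf_A a₀ ha₀
    simp only [hf, zero_apply] at hη ha₀
    linarith
  obtain ⟨z, hz, hfz⟩ := f.exists_norm_lt_one_lt_apply (half_lt_self hf_pos)
  refine ⟨-z, by rwa [norm_neg], fun t ht ↦ (le_infDist ⟨a₀, ha₀⟩).2 fun a ha ↦ ?_⟩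
  have hlower : ‖f‖ * (d + t / 2) ≤ f (a - (η + t • -z)) := by
    have hdescent := mul_le_mul_of_nonneg_left hfz.le ht
    simp only [map_sub, map_add, map_smul, map_neg, smul_eq_mul]
    linarith [hf_A a ha]
  have hupper : f (a - (η + t • -z)) ≤ ‖f‖ * dist (η + t • -z) a := by
    rw [dist_comm, dist_eq_norm]
    exact (Real.le_norm_self _).trans (f.le_opNorm _)
  exact le_of_mul_le_mul_left (hlower.trans hupper) hf_pos

theorem infDist_add_half_le_of_thickening_subset_thickening (hA : Convex ℝ A) {c r : ℝ}
    (hc : 0 < c) (hMc : thickening c M ⊆ thickening r A) {η : E} (hη : η ∈ M)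
    (hd : 0 < infDist η A) : infDist η A + c / 2 ≤ r := by
  obtain ⟨ζ, hζ, hζ_dist⟩ := hA.exists_infDist_add_half_le hd
  have hAne : A.Nonempty := Set.nonempty_iff_ne_empty.2 fun h ↦ by simp [h] at hd
  have hlt : ∀ t, 0 ≤ t → t < c → infDist η A + t / 2 < r := fun t ht htc ↦ by
    have hmem : η + t • ζ ∈ thickening c M := ball_subset_thickening hη c <| by
      rw [mem_ball, dist_eq_norm, add_sub_cancel_left, norm_smul, Real.norm_of_nonneg ht]
      exact (mul_le_of_le_one_right ht hζ.le).trans_lt htc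
    exact (hζ_dist t ht).trans_lt ((mem_thickening_iff_infDist_lt hAne).1 (hMc hmem))
  have hdr : infDist η A < r := by simpa using hlt 0 le_rfl hc
  by_contra! h
  have := hlt (2 * (r - infDist η A)) (by linarith) (by linarith)
  linarith

theorem subset_thickening_of_thickening_subset_thickening (hA : Convex ℝ A) {c r s : ℝ}
    (hc : 0 < c) (hMc : thickening c M ⊆ thickening r A) (hs : r - c / 2 < s) (hs₀ : 0 < s) :
    M ⊆ thickening s A := by
  intro η hη
  have hAne : A.Nonempty :=
    (thickening_nonempty_iff.1 ⟨η, hMc (self_subset_thickening hc M hη)⟩).2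
  rw [mem_thickening_iff_infDist_lt hAne]
  rcases (infDist_nonneg (x := η) (s := A)).eq_or_lt with hd | hd
  · rwa [← hd]
  · linarith [infDist_add_half_le_of_thickening_subset_thickening hA hc hMc hη hd]

end Tube

theorem ubounded_subset_smaller_tube_general
    (A : Set (StrongDual ℝ X)) (hA : Convex ℝ A) (r : ℝ) (hr : 0 < r)
    (M : Set (StrongDual ℝ X)) (c : ℝ) (hc : 0 < c)
    (hMc : M + ball (0 : StrongDual ℝ X) c ⊆ A + ball (0 : StrongDual ℝ X) r) :
    (∀ η ∈ M, 0 < infDist η A → c / 2 ≤ r) ∧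
      (∀ s : ℝ, r - c / 2 < s → 0 < s →
        M ⊆ A + ball (0 : StrongDual ℝ X) s) ∧
      (∃ s : ℝ, 0 < s ∧ s < r ∧ M ⊆ A + ball (0 : StrongDual ℝ X) s) := by
  simp only [add_ball_zero] at hMc ⊢
  refine ⟨fun η hη hd ↦ ?_, fun s hs hs₀ ↦ ?_, max (r - c / 4) (r / 2), ?_, ?_, ?_⟩
  · linarith [infDist_add_half_le_of_thickening_subset_thickening hA hc hMc hη hd]
  · exact subset_thickening_of_thickening_subset_thickening hA hc hMc hs hs₀
  · exact (half_pos hr).trans_le (le_max_right _ _)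
  · exact max_lt (by linarith) (half_lt_self hr)
  · exact subset_thickening_of_thickening_subset_thickening hA hc hMc
      ((by linarith : r - c / 2 < r - c / 4).trans_le (le_max_left _ _))
      ((half_pos hr).trans_le (le_max_right _ _))

/-- Let `A ⊆ X*` be convex, `r > 0`, `U = A + r B_{X*}`, and let `M` be a bounded set with
`M + c B_{X*} ⊆ U` for some `c > 0`. Then every point of `M` at positive distance from `A`
forces `c/2 ≤ r`; moreover `M ⊆ A + s B_{X*}` for every `s ∈ (r - c/2, r)` with `s > 0`,
and in particular there is `s ∈ (0, r)` with `M ⊆ A + s B_{X*}`. -/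
theorem ubounded_subset_smaller_tube [CompleteSpace X]
    (A : Set (StrongDual ℝ X)) (hA : Convex ℝ A) (r : ℝ) (hr : 0 < r)
    (M : Set (StrongDual ℝ X)) (hMb : Bornology.IsBounded M) (c : ℝ) (hc : 0 < c)
    (hMc : M + ball (0 : StrongDual ℝ X) c ⊆ A + ball (0 : StrongDual ℝ X) r) :
    (∀ η ∈ M, 0 < infDist η A → c / 2 ≤ r) ∧
      (∀ s : ℝ, r - c / 2 < s → 0 < s →
        M ⊆ A + ball (0 : StrongDual ℝ X) s) ∧
      (∃ s : ℝ, 0 < s ∧ s < r ∧ M ⊆ A + ball (0 : StrongDual ℝ X) s) :=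
  ubounded_subset_smaller_tube_general A hA r hr M c hc hMc
end
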